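/- If S ⊆ C_s(G,X) satisfies the compactness axiom and X is locally compact, then the star-construction S*W is metrizable for every subset W ⊆ G × X. -/

import Mathlib

/-!
The hat topology makes `C(G, X̂)` far from Hausdorff (`ω` lies in every nonempty open set),
so Hausdorffness of `S*W` has to come from maximality: two maximally defined maps defined at a
common point either take different values somewhere on their common domain, where evaluation
separates them, or agree there, and then gluing them gives a common extension with connected
domain, so they are equal. The compactness axiom makes `S*(G × X)` locally compact, since `S*N`
is a compact neighbourhood of `(g, φ)` whenever `N` is a compact neighbourhood of `(g, φ g)`.
Since `C(G, X̂)` is second countable, `S*(G × X)` is a second-countable locally compact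
Hausdorff space, hence metrizable by Urysohn, and so is its subspace `S*W`.
-/

open Set Filter Topology TopologicalSpace

namespace Yorke

/-- The space `X̂ = X ∪ {ω}`, encoded as `Option X` with `ω = none`.  Its open sets are
`X̂` itself together with the open sets of `X`. -/
instance hatTopology (X : Type*) [TopologicalSpace X] : TopologicalSpace (Option X) :=
  TopologicalSpace.generateFrom
    ({Set.univ} ∪ {s : Set (Option X) | ∃ u : Set X, IsOpen u ∧ s = (Option.some : X → Option X) '' u})

/-- The space `C_p(G,X)` of partial maps from `G` to `X` (continuous maps defined on a
nonempty open subset of `G`), encoded via the bijection `μ` with the subspace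
`{f : C(G,X̂) | f⁻¹(X) ≠ ∅}` of `C(G,X̂)`; it carries the compact-open topology. -/
abbrev Cp (G X : Type*) [TopologicalSpace G] [TopologicalSpace X] : Type _ :=
  {f : C(G, Option X) // {g : G | f g ≠ none}.Nonempty}

variable {G X : Type*} [TopologicalSpace G] [TopologicalSpace X]

/-- The domain of a partial map. -/
def dom (φ : Cp G X) : Set G := {g : G | φ.1 g ≠ none}

/-- A partial map with nonempty connected domain is maximally defined if every partial map
with nonempty connected domain which extends it is equal to it. -/
def MaximallyDefined (φ : Cp G X) : Prop :=
  IsConnected (dom φ) ∧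
    ∀ ψ : Cp G X, IsConnected (dom ψ) → dom φ ⊆ dom ψ →
      (∀ g ∈ dom φ, φ.1 g = ψ.1 g) → φ = ψ

/-- The space `C_s(G,X)` of maximally defined partial maps, with the subspace topology. -/
abbrev Cs (G X : Type*) [TopologicalSpace G] [TopologicalSpace X] : Type _ :=
  {φ : Cp G X // MaximallyDefined φ}

/-- The orbit `O(φ) = {φ(g) : g ∈ dom φ}`. -/
def orbit (φ : Cs G X) : Set X := {x : X | ∃ g : G, φ.1.1 g = some x}

/-- The star-construction `S*W = {(g,φ) : φ ∈ S, g ∈ dom φ, (g,φ(g)) ∈ W}`. -/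
def star (S : Set (Cs G X)) (W : Set (G × X)) : Set (G × Cs G X) :=
  {p : G × Cs G X | p.2 ∈ S ∧ ∃ x : X, p.2.1.1 p.1 = some x ∧ (p.1, x) ∈ W}

/-- `S` satisfies the compactness axiom if `S*W` is compact for every compact `W`. -/
def CompactnessAxiom (S : Set (Cs G X)) : Prop :=
  ∀ W : Set (G × X), IsCompact W → IsCompact (star S W)

/-- `S` satisfies the existence axiom on `W` if `S*{(t,x)}` is nonempty for all `(t,x) ∈ W`. -/
def ExistenceAxiom (S : Set (Cs G X)) (W : Set (G × X)) : Prop :=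
  ∀ p ∈ W, (star S {p}).Nonempty

/-- `S` satisfies the uniqueness axiom on `W` if `S*{(t,x)}` is empty or a singleton. -/
def UniquenessAxiom (S : Set (Cs G X)) (W : Set (G × X)) : Prop :=
  ∀ p ∈ W, (star S {p}).Subsingleton

section GroupPart

variable {G X : Type*} [TopologicalSpace X] [Group G] [TopologicalSpace G] [IsTopologicalGroup G]

/-- The shift `σ(g,φ)`, the partial map `x ↦ φ(xg)` with domain `(dom φ)g⁻¹`. -/
def shift (g : G) (φ : Cp G X) : Cp G X :=
  ⟨⟨fun x => φ.1 (x * g), φ.1.continuous.comp (continuous_mul_right g)⟩, by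
    obtain ⟨g₀, hg₀⟩ := φ.2
    exact ⟨g₀ * g⁻¹, by simpa [inv_mul_cancel_right] using hg₀⟩⟩

/-- `S ⊆ C_s(G,X)` is `σ`-invariant if `σ(g,φ) ∈ S` for all `g ∈ G`, `φ ∈ S`. -/
def SigmaInvariant (S : Set (Cs G X)) : Prop :=
  ∀ (g : G) (φ : Cs G X), φ ∈ S → ∃ ψ : Cs G X, ψ ∈ S ∧ ψ.1 = shift g φ.1

/-- `A ⊆ X` is weakly invariant with respect to `S` if every `x ∈ A` is the value at the
identity of some `φ ∈ S` with `O(φ) ⊆ A`. -/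
def WeaklyInvariant (S : Set (Cs G X)) (A : Set X) : Prop :=
  ∀ x ∈ A, ∃ φ ∈ S, φ.1.1 (1 : G) = some x ∧ orbit φ ⊆ A

/-- `x` is an equilibrium of `S` if some `φ ∈ S` has `φ(e) = x` and `O(φ) = {x}`. -/
def Equilibrium (S : Set (Cs G X)) (x : X) : Prop :=
  ∃ φ ∈ S, φ.1.1 (1 : G) = some x ∧ orbit φ = {x}

/-- The set of motions `{π(·,x) : x ∈ X} ⊆ C_s(G,X)` of a `G`-action `π`. -/
def actionSet (π : G × X → X) : Set (Cs G X) :=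
  {φ : Cs G X | ∃ x : X, ∀ g : G, φ.1.1 g = some (π (g, x))}

end GroupPart

/-- An isomorphism `<H,k,η> : S*W → S'*W'` of star-constructions: the three maps are
homeomorphisms satisfying `ev ∘ H = k ∘ ev` and `p ∘ H = η ∘ p`. -/
structure StarIso {G X G' X' : Type*} [TopologicalSpace G] [TopologicalSpace X]
    [TopologicalSpace G'] [TopologicalSpace X']
    (S : Set (Cs G X)) (W : Set (G × X)) (S' : Set (Cs G' X')) (W' : Set (G' × X')) where
  H : ↥(star S W) ≃ₜ ↥(star S' W')
  k : ↥W ≃ₜ ↥W'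
  η : ↥S ≃ₜ ↥S'
  ev_comm : ∀ (q : ↥(star S W)) (x : X), q.1.2.1.1 q.1.1 = some x →
      ∀ hW : (q.1.1, x) ∈ W, ∀ x' : X', (H q).1.2.1.1 (H q).1.1 = some x' →
      ((k ⟨(q.1.1, x), hW⟩ : ↥W') : G' × X') = ((H q).1.1, x')
  p_comm : ∀ q : ↥(star S W), (H q).1.2 = ((η ⟨q.1.2, q.2.1⟩ : ↥S') : Cs G' X')

/-- A map `k = (τ,h) : W → W'` preserves phase space if `h(g,x)` does not depend on `g`. -/
def PreservesPhase {G X G' X' : Type*} [TopologicalSpace G] [TopologicalSpace X]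
    [TopologicalSpace G'] [TopologicalSpace X'] {W : Set (G × X)} {W' : Set (G' × X')}
    (k : ↥W → ↥W') : Prop :=
  ∀ w w' : ↥W, (w : G × X).2 = (w' : G × X).2 →
    ((k w : ↥W') : G' × X').2 = ((k w' : ↥W') : G' × X').2

/-- Two continuous maps are isotopic if they are connected by a continuous family of
homeomorphisms parametrized by `[0,1]`. -/
def Isotopic {A B : Type*} [TopologicalSpace A] [TopologicalSpace B] (f₀ f₁ : A → B) : Prop :=
  ∃ F : unitInterval × A → B, Continuous F ∧ (∀ a, F (0, a) = f₀ a) ∧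
    (∀ a, F (1, a) = f₁ a) ∧ ∀ s : unitInterval, IsHomeomorph fun a => F (s, a)

end Yorke

namespace Yorke

section Hat

variable {X : Type*} [TopologicalSpace X]

theorem isOpenMap_some : IsOpenMap (some : X → Option X) :=
  fun u hu => .basic _ (Or.inr ⟨u, hu, rfl⟩)

theorem continuous_of_isOpen_preimage_image_some {Y : Type*} [TopologicalSpace Y]
    {f : Y → Option X} (hf : ∀ u : Set X, IsOpen u → IsOpen (f ⁻¹' (some '' u))) :
    Continuous f :=
  continuous_generateFrom_iff.2 <| by
    rintro s (rfl | ⟨u, hu, rfl⟩)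
    exacts [isOpen_univ, hf u hu]

instance [SecondCountableTopology X] : SecondCountableTopology (Option X) := by
  obtain ⟨b, hbc, -, hb⟩ := exists_countable_basis X
  refine ⟨⟨insert univ (image some '' b), (hbc.image _).insert _, le_antisymm ?_ ?_⟩⟩
  · refine le_generateFrom_iff_subset_isOpen.2 ?_
    rintro s (rfl | ⟨u, hub, rfl⟩)
    exacts [isOpen_univ (X := Option X), isOpenMap_some u (hb.isOpen hub)]
  · refine le_generateFrom_iff_subset_isOpen.2 ?_
    rintro s (rfl | ⟨u, hu, rfl⟩)
    · exact .univ
    · rw [hb.open_eq_sUnion' hu, image_sUnion]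
      refine .sUnion _ ?_
      rintro t ⟨v, ⟨hvb, -⟩, rfl⟩
      exact .basic _ (mem_insert_of_mem _ ⟨v, hvb, rfl⟩)

theorem continuous_option_or {Y : Type*} [TopologicalSpace Y] {f g : Y → Option X}
    (hf : Continuous f) (hg : Continuous g)
    (h : EqOn f g ({t | f t ≠ none} ∩ {t | g t ≠ none})) :
    Continuous fun t => (f t).or (g t) := by
  refine continuous_of_isOpen_preimage_image_some fun u hu => ?_
  have : (fun t => (f t).or (g t)) ⁻¹' (some '' u) =
      f ⁻¹' (some '' u) ∪ g ⁻¹' (some '' u) := by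
    ext t
    by_cases hft : f t = none
    · simp [hft]
    by_cases hgt : g t = none
    · simp [hgt]
    simp [h ⟨hft, hgt⟩]
  rw [this]
  exact ((isOpenMap_some u hu).preimage hf).union ((isOpenMap_some u hu).preimage hg)

end Hat

instance {G X : Type*} [TopologicalSpace G] [TopologicalSpace X] [LocallyCompactSpace G]
    [SecondCountableTopology G] [SecondCountableTopology X] :
    SecondCountableTopology (Cs G X) :=
  have : SecondCountableTopology (Cp G X) := secondCountableTopology_induced _ _ _
  secondCountableTopology_induced _ _ _

section Glue

variable {G X : Type*} [TopologicalSpace G] [TopologicalSpace X]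

def Cp.glue (φ ψ : Cp G X) (h : EqOn φ.1 ψ.1 (dom φ ∩ dom ψ)) : Cp G X :=
  ⟨⟨fun t => (φ.1 t).or (ψ.1 t), continuous_option_or φ.1.continuous ψ.1.continuous h⟩,
    φ.2.mono fun t ht => by simpa [Option.or_eq_none_iff] using fun h' => absurd h' ht⟩

theorem Cp.dom_glue (φ ψ : Cp G X) (h : EqOn φ.1 ψ.1 (dom φ ∩ dom ψ)) :
    dom (φ.glue ψ h) = dom φ ∪ dom ψ := by
  ext t
  simp only [dom, Cp.glue, ContinuousMap.coe_mk, mem_ofPred_eq, mem_union, ne_eq,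
    Option.or_eq_none_iff, not_and_or]

theorem MaximallyDefined.eq_of_eqOn {φ ψ : Cp G X} (hφ : MaximallyDefined φ)
    (hψ : MaximallyDefined ψ) (hmeet : (dom φ ∩ dom ψ).Nonempty)
    (h : EqOn φ.1 ψ.1 (dom φ ∩ dom ψ)) : φ = ψ := by
  have hdom := Cp.dom_glue φ ψ h
  have hconn : IsConnected (dom (φ.glue ψ h)) := hdom ▸ IsConnected.union hmeet hφ.1 hψ.1
  have hφθ : φ = φ.glue ψ h :=
    hφ.2 _ hconn (hdom ▸ subset_union_left) fun t ht => (Option.or_of_isSome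
      (Option.isSome_iff_ne_none.2 ht)).symm
  have hψθ : ψ = φ.glue ψ h := hψ.2 _ hconn (hdom ▸ subset_union_right) fun t ht => by
    by_cases hφt : φ.1 t = none
    · simp [Cp.glue, hφt]
    · simp [Cp.glue, h ⟨hφt, ht⟩]
  exact hφθ.trans hψθ.symm

theorem Cs.exists_apply_ne_of_ne {φ ψ : Cs G X} (hne : φ ≠ ψ) {g : G} (hφ : g ∈ dom φ.1)
    (hψ : g ∈ dom ψ.1) : ∃ t x y, φ.1.1 t = some x ∧ ψ.1.1 t = some y ∧ x ≠ y := by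
  by_contra! hsep
  refine hne (Subtype.ext (φ.2.eq_of_eqOn ψ.2 ⟨g, hφ, hψ⟩ fun t ⟨hφt, hψt⟩ => ?_))
  obtain ⟨x, hx⟩ := Option.ne_none_iff_exists'.1 hφt
  obtain ⟨y, hy⟩ := Option.ne_none_iff_exists'.1 hψt
  rw [hx, hy, hsep t x y hx hy]

end Glue

section Star

variable {G X : Type*} [TopologicalSpace G] [TopologicalSpace X]

instance [T2Space G] [T2Space X] (S : Set (Cs G X)) (W : Set (G × X)) :
    T2Space (star S W) := by
  refine ⟨fun p q hpq => ?_⟩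
  by_cases hg : p.1.1 = q.1.1
  · obtain ⟨-, x, hpx, -⟩ := p.2
    obtain ⟨-, y, hqy, -⟩ := q.2
    have hne : p.1.2 ≠ q.1.2 := fun h => hpq (Subtype.ext (Prod.ext hg h))
    obtain ⟨t, x, y, hx, hy, hxy⟩ := Cs.exists_apply_ne_of_ne hne (g := p.1.1)
      (by simp [dom, hpx]) (by simp [dom, hg, hqy])
    obtain ⟨u, v, hu, hv, hxu, hyv, huv⟩ := t2_separation hxy
    have hev : Continuous fun r : star S W => r.1.2.1.1 t := by fun_prop
    exact ⟨_, _, (isOpenMap_some u hu).preimage hev, (isOpenMap_some v hv).preimage hev,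
      ⟨x, hxu, hx.symm⟩, ⟨y, hyv, hy.symm⟩,
      ((disjoint_image_iff (Option.some_injective X)).2 huv).preimage _⟩
  · exact separated_by_continuous (f := fun r : star S W => r.1.1) (by fun_prop) hg

theorem star_mono (S : Set (Cs G X)) {W W' : Set (G × X)} (h : W ⊆ W') :
    star S W ⊆ star S W' :=
  fun _ ⟨hS, x, hx, hW⟩ => ⟨hS, x, hx, h hW⟩

variable [LocallyCompactSpace G]

theorem isOpen_val_preimage_star (S : Set (Cs G X)) {U : Set (G × X)} (hU : IsOpen U) :
    IsOpen ((↑) ⁻¹' star S U : Set (star S univ)) := by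
  have : ((↑) ⁻¹' star S U : Set (star S univ)) =
      (fun r : star S univ => (r.1.1, r.1.2.1.1 r.1.1)) ⁻¹' (Prod.map id some '' U) := by
    ext r
    constructor
    · rintro ⟨-, x, hx, hU⟩
      exact ⟨(r.1.1, x), hU, by simp [hx]⟩
    · rintro ⟨⟨g, x⟩, hU, hgx⟩
      obtain ⟨rfl : g = r.1.1, hx⟩ := Prod.mk.inj hgx
      exact ⟨r.2.1, x, hx.symm, hU⟩
  rw [this]
  exact ((IsOpenMap.id.prodMap isOpenMap_some) U hU).preimage (by fun_prop)

theorem weaklyLocallyCompactSpace_star_univ [LocallyCompactSpace X] {S : Set (Cs G X)}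
    (hS : CompactnessAxiom S) : WeaklyLocallyCompactSpace (star S univ) := by
  refine ⟨?_⟩
  rintro ⟨⟨g, φ⟩, hφ, x, hx, -⟩
  obtain ⟨N, hN, hgx⟩ := exists_compact_mem_nhds (g, x)
  refine ⟨(↑) ⁻¹' star S N, ?_, ?_⟩
  · rw [IsEmbedding.subtypeVal.isCompact_iff,
      image_preimage_eq_of_subset (by simpa using star_mono S (subset_univ N))]
    exact hS N hN
  · refine mem_of_superset ((isOpen_val_preimage_star S isOpen_interior).mem_nhds ?_)
      (preimage_mono (star_mono S interior_subset))
    exact ⟨hφ, x, hx, mem_interior_iff_mem_nhds.2 hgx⟩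

end Star

end Yorke

namespace Yorke

variable {G X : Type*} [Group G] [TopologicalSpace G] [IsTopologicalGroup G]
  [LocallyCompactSpace G] [SecondCountableTopology G] [T2Space G]
  [MetricSpace X] [SecondCountableTopology X]

/-- If `S` satisfies the compactness axiom and `X` is locally compact, `S*W` is
metrizable for every `W`. -/
theorem statement_7 [LocallyCompactSpace X] (S : Set (Cs G X)) (hS : CompactnessAxiom S)
    (W : Set (G × X)) : MetrizableSpace ↥(star S W) := by
  have := weaklyLocallyCompactSpace_star_univ hS
  have := metrizableSpace_of_t3_secondCountable (star S univ)
  exact (IsEmbedding.inclusion (star_mono S (subset_univ W))).metrizableSpace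

end Yorke
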